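/- Let H be a real symmetric positive definite p×p matrix. For all p×p real matrices A with det A = 1, |∫_{S_A} xᵀHx dx| ≥ ρ·p·(det H)^{1/p}, where ρ = ∫_{S_I}(y¹)² dy, with equality if and only if AᵀA = c⁻¹H for the scalar c = (det H)^{1/p}. -/

import Mathlib

open MeasureTheory Matrix

section Aux

lemma isCompact_unitBall {p : ℕ} : IsCompact {y : Fin p → ℝ | y ⬝ᵥ y ≤ 1} := by
  have hc : Continuous fun y : Fin p → ℝ => y ⬝ᵥ y := by
    unfold dotProduct
    exact continuous_finset_sum _ fun i _ => (continuous_apply i).mul (continuous_apply i)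
  apply Metric.isCompact_of_isClosed_isBounded
  · exact isClosed_le hc continuous_const
  · rw [Metric.isBounded_iff_subset_closedBall 0]
    refine ⟨1, fun y hy => ?_⟩
    rw [Metric.mem_closedBall, dist_zero_right]
    rw [pi_norm_le_iff_of_nonneg zero_le_one]
    intro i
    rw [Real.norm_eq_abs, abs_le_one_iff_mul_self_le_one]
    calc y i * y i ≤ ∑ j, y j * y j :=
          Finset.single_le_sum (fun j _ => mul_self_nonneg (y j)) (Finset.mem_univ i)
      _ ≤ 1 := hy

lemma cov {p : ℕ} (B : Matrix (Fin p) (Fin p) ℝ) (hB : |B.det| = 1)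
    (s : Set (Fin p → ℝ)) (f : (Fin p → ℝ) → ℝ) :
    ∫ x in (fun x => B *ᵥ x) ⁻¹' s, f (B *ᵥ x) = ∫ y in s, f y := by
  have hdet : B.det ≠ 0 := by intro h; rw [h] at hB; simp at hB
  have hfun : (fun x : Fin p → ℝ => B *ᵥ x) = ⇑(Matrix.toLin' B) :=
    funext fun x => (Matrix.toLin'_apply B x).symm
  have hmeas : Measurable (⇑(Matrix.toLin' B)) :=
    (LinearMap.continuous_on_pi _).measurable
  have hmp : MeasurePreserving (⇑(Matrix.toLin' B)) volume volume := by
    refine ⟨hmeas, ?_⟩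
    rw [Real.map_matrix_volume_pi_eq_smul_volume_pi hdet]
    rw [abs_inv, hB]
    norm_num
  have : Invertible B := B.invertibleOfIsUnitDet (isUnit_iff_ne_zero.mpr hdet)
  have hemb : MeasurableEmbedding (⇑(Matrix.toLin' B)) := by
    let e : (Fin p → ℝ) ≃ₗ[ℝ] (Fin p → ℝ) := Matrix.toLinearEquiv' B this
    have he : ⇑(e.toContinuousLinearEquiv.toHomeomorph) = ⇑(Matrix.toLin' B) := rfl
    rw [← he]
    exact e.toContinuousLinearEquiv.toHomeomorph.measurableEmbedding
  rw [hfun]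
  exact hmp.setIntegral_preimage_emb hemb f s

lemma integral_offdiag_zero {p : ℕ} {i j : Fin p} (hij : i ≠ j) :
    ∫ y in {y : Fin p → ℝ | y ⬝ᵥ y ≤ 1}, y i * y j = 0 := by
  classical
  set d : Fin p → ℝ := fun k => if k = i then -1 else 1 with hd
  set B := Matrix.diagonal d with hBdef
  have hdet : |B.det| = 1 := by
    rw [hBdef, Matrix.det_diagonal]
    rw [Finset.prod_eq_single i (fun b _ hb => by simp [hd, hb])
      (fun h => absurd (Finset.mem_univ i) h)]
    simp [hd]
  have key := cov B hdet {y | y ⬝ᵥ y ≤ 1} (fun y => y i * y j)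
  have hpre : (fun x => B *ᵥ x) ⁻¹' {y : Fin p → ℝ | y ⬝ᵥ y ≤ 1}
      = {y : Fin p → ℝ | y ⬝ᵥ y ≤ 1} := by
    ext x
    simp only [Set.mem_preimage, Set.mem_setOf_eq]
    have : (B *ᵥ x) ⬝ᵥ (B *ᵥ x) = x ⬝ᵥ x := by
      unfold dotProduct
      refine Finset.sum_congr rfl fun k _ => ?_
      rw [hBdef, Matrix.mulVec_diagonal]
      rcases eq_or_ne k i with h | h <;> simp [hd, h]
    rw [this]
  rw [hpre] at key
  have hcong : ∫ x in {y : Fin p → ℝ | y ⬝ᵥ y ≤ 1}, (B *ᵥ x) i * (B *ᵥ x) j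
      = ∫ x in {y : Fin p → ℝ | y ⬝ᵥ y ≤ 1}, -(x i * x j) := by
    refine integral_congr_ae (Filter.Eventually.of_forall fun x => ?_)
    show (Matrix.diagonal d *ᵥ x) i * (Matrix.diagonal d *ᵥ x) j = -(x i * x j)
    rw [Matrix.mulVec_diagonal, Matrix.mulVec_diagonal]
    simp [hd, hij.symm]
  rw [hcong, integral_neg] at key
  linarith

lemma integral_sq_swap {p : ℕ} (i j : Fin p) :
    ∫ y in {y : Fin p → ℝ | y ⬝ᵥ y ≤ 1}, (y i)^2
      = ∫ y in {y : Fin p → ℝ | y ⬝ᵥ y ≤ 1}, (y j)^2 := by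
  classical
  set σ : Equiv.Perm (Fin p) := Equiv.swap i j with hσ
  set B := σ.permMatrix ℝ with hBdef
  have hmv : ∀ (x : Fin p → ℝ) (k : Fin p), (B *ᵥ x) k = x (σ k) := by
    intro x k
    simp [hBdef, Matrix.mulVec, dotProduct, PEquiv.toMatrix_apply, Equiv.toPEquiv_apply, ite_mul]
  have hdet : |B.det| = 1 := by
    rw [hBdef, Matrix.det_permutation]
    rcases Int.units_eq_one_or σ.sign with h | h <;> rw [h] <;> norm_num
  have key := cov B hdet {y | y ⬝ᵥ y ≤ 1} (fun y => (y j)^2)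
  have hpre : (fun x => B *ᵥ x) ⁻¹' {y : Fin p → ℝ | y ⬝ᵥ y ≤ 1}
      = {y : Fin p → ℝ | y ⬝ᵥ y ≤ 1} := by
    ext x
    simp only [Set.mem_preimage, Set.mem_setOf_eq]
    have : (B *ᵥ x) ⬝ᵥ (B *ᵥ x) = x ⬝ᵥ x := by
      unfold dotProduct
      rw [Finset.sum_congr rfl fun k _ => by rw [hmv x k]]
      exact Equiv.sum_comp σ (fun l => x l * x l)
    rw [this]
  rw [hpre] at key
  have hcong : ∫ x in {y : Fin p → ℝ | y ⬝ᵥ y ≤ 1}, ((B *ᵥ x) j)^2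
      = ∫ x in {y : Fin p → ℝ | y ⬝ᵥ y ≤ 1}, (x i)^2 := by
    refine integral_congr_ae (Filter.Eventually.of_forall fun x => ?_)
    simp only [hmv]
    simp [hσ, Equiv.swap_apply_right]
  rw [hcong] at key
  exact key

lemma rho_pos {p : ℕ} (i : Fin p) :
    0 < ∫ y in {y : Fin p → ℝ | y ⬝ᵥ y ≤ 1}, (y i)^2 := by
  classical
  have hc : Continuous fun y : Fin p → ℝ => y ⬝ᵥ y := by
    unfold dotProduct
    exact continuous_finset_sum _ fun k _ => (continuous_apply k).mul (continuous_apply k)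
  have hInt : IntegrableOn (fun y : Fin p → ℝ => (y i)^2) {y : Fin p → ℝ | y ⬝ᵥ y ≤ 1} volume :=
    (((continuous_apply i).pow 2).continuousOn).integrableOn_compact isCompact_unitBall
  have key := setIntegral_pos_iff_support_of_nonneg_ae (μ := volume)
    (s := {y : Fin p → ℝ | y ⬝ᵥ y ≤ 1}) (f := fun y : Fin p → ℝ => (y i)^2)
    (Filter.Eventually.of_forall fun y => sq_nonneg (y i)) hInt
  rw [key]
  set U : Set (Fin p → ℝ) := {y | 0 < y i} ∩ {y | y ⬝ᵥ y < 1} with hU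
  have hUopen : IsOpen U :=
    (isOpen_lt continuous_const (continuous_apply i)).inter (isOpen_lt hc continuous_const)
  have hUne : (Pi.single i (1/2 : ℝ)) ∈ U := by
    constructor
    · simp [Pi.single_apply]
    · show (Pi.single i (1/2:ℝ)) ⬝ᵥ (Pi.single i (1/2:ℝ)) < 1
      have : (Pi.single i (1/2:ℝ)) ⬝ᵥ (Pi.single i (1/2:ℝ)) = 1/4 := by
        unfold dotProduct
        rw [Finset.sum_eq_single i (fun b _ hb => by simp [Pi.single_apply, hb])
          (fun h => absurd (Finset.mem_univ i) h)]
        norm_num [Pi.single_apply]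
      rw [this]; norm_num
  have hsub : U ⊆ Function.support (fun y : Fin p → ℝ => (y i)^2) ∩ {y | y ⬝ᵥ y ≤ 1} := by
    rintro y ⟨h1, h2⟩
    exact ⟨pow_ne_zero 2 (ne_of_gt h1), Set.mem_setOf_eq ▸ le_of_lt h2⟩
  calc (0:ENNReal) < volume U := hUopen.measure_pos volume ⟨_, hUne⟩
    _ ≤ _ := measure_mono hsub

lemma amgm {p : ℕ} (hp : 0 < p) (μ : Fin p → ℝ) (hμ : ∀ i, 0 < μ i) :
    (p : ℝ) * (∏ i, μ i) ^ ((1:ℝ)/p) ≤ ∑ i, μ i ∧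
    ((∑ i, μ i) = (p:ℝ) * (∏ i, μ i) ^ ((1:ℝ)/p) ↔
      ∀ i, μ i = (∏ i, μ i) ^ ((1:ℝ)/p)) := by
  classical
  have hppos : (0:ℝ) < p := Nat.cast_pos.mpr hp
  set G := (∏ i, μ i) ^ ((1:ℝ)/p) with hG
  have hprod : 0 < ∏ i, μ i := Finset.prod_pos fun i _ => hμ i
  have hGpos : 0 < G := Real.rpow_pos_of_pos hprod _
  set w : Fin p → ℝ := fun _ => (p:ℝ)⁻¹ with hw
  have hw1 : ∑ _i : Fin p, (p:ℝ)⁻¹ = 1 := by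
    rw [Finset.sum_const, Finset.card_univ, Fintype.card_fin, nsmul_eq_mul]
    field_simp
  set m : ℝ := ∑ i : Fin p, (p:ℝ)⁻¹ • μ i with hm
  have hmval : m = (p:ℝ)⁻¹ * ∑ i, μ i := by
    rw [hm]; simp only [smul_eq_mul]; rw [← Finset.mul_sum]
  haveI : Nonempty (Fin p) := Fin.pos_iff_nonempty.mp hp
  have hmpos : 0 < m := by
    rw [hmval]
    exact mul_pos (by positivity) (Finset.sum_pos (fun i _ => hμ i) Finset.univ_nonempty)
  have hlogG : Real.log G = ∑ i : Fin p, (p:ℝ)⁻¹ • Real.log (μ i) := by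
    rw [hG, Real.log_rpow hprod, Real.log_prod fun i _ => (hμ i).ne', Finset.mul_sum]
    simp [smul_eq_mul, one_div]
  have hjensen : ∑ i : Fin p, (p:ℝ)⁻¹ • Real.log (μ i) ≤ Real.log m :=
    strictConcaveOn_log_Ioi.concaveOn.le_map_sum (fun i _ => by positivity) hw1
      (fun i _ => hμ i)
  have hGm : G ≤ m := by
    rw [← Real.log_le_log_iff hGpos hmpos, hlogG]
    exact hjensen
  have hsum_eq : (p:ℝ) * m = ∑ i, μ i := by rw [hmval]; field_simp
  refine ⟨?_, ?_, ?_⟩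
  · calc (p:ℝ) * G ≤ (p:ℝ) * m := by nlinarith
      _ = ∑ i, μ i := hsum_eq
  · intro h
    have hGm' : G = m := by
      have h1 : (p:ℝ) * m = (p:ℝ) * G := by rw [hsum_eq, h]
      have := mul_left_cancel₀ (ne_of_gt hppos) h1
      linarith
    have hjeq : Real.log (∑ i : Fin p, (p:ℝ)⁻¹ • μ i)
        = ∑ i : Fin p, (p:ℝ)⁻¹ • Real.log (μ i) := by
      rw [← hm, ← hGm', hlogG]
    have hall := (strictConcaveOn_log_Ioi.map_sum_eq_iff (fun i _ => by positivity) hw1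
      (fun i _ => hμ i)).mp hjeq
    intro i
    have hi := hall i (Finset.mem_univ i)
    rw [← hm, ← hGm'] at hi
    exact hi
  · intro h
    have : ∑ i, μ i = ∑ _i : Fin p, G := Finset.sum_congr rfl fun i _ => h i
    rw [this, Finset.sum_const, Finset.card_univ, Fintype.card_fin, nsmul_eq_mul]

lemma trace_bound {p : ℕ} (hp : 0 < p) (M : Matrix (Fin p) (Fin p) ℝ) (hM : M.PosDef) :
    (p:ℝ) * M.det ^ ((1:ℝ)/p) ≤ M.trace ∧
    (M.trace = (p:ℝ) * M.det ^ ((1:ℝ)/p) ↔ M = (M.det ^ ((1:ℝ)/p)) • 1) := by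
  classical
  have her : M.IsHermitian := hM.1
  set μ := her.eigenvalues with hμdef
  have hμpos : ∀ i, 0 < μ i := hM.eigenvalues_pos
  have hdet : M.det = ∏ i, μ i := by
    rw [her.det_eq_prod_eigenvalues]; norm_num; rfl
  set U : Matrix (Fin p) (Fin p) ℝ := (her.eigenvectorUnitary : Matrix (Fin p) (Fin p) ℝ) with hU
  have hUU : star U * U = 1 := Matrix.mem_unitaryGroup_iff'.mp her.eigenvectorUnitary.2
  have hUU' : U * star U = 1 := Matrix.mem_unitaryGroup_iff.mp her.eigenvectorUnitary.2
  have hspec : M = U * Matrix.diagonal μ * star U := by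
    have := her.spectral_theorem
    simpa using this
  have htr : M.trace = ∑ i, μ i := by
    nth_rewrite 1 [hspec]
    rw [Matrix.trace_mul_cycle, hUU, Matrix.one_mul, Matrix.trace_diagonal]
  obtain ⟨hineq, hiff⟩ := amgm hp μ hμpos
  constructor
  · rw [htr, hdet]; exact hineq
  · rw [htr, hdet]
    constructor
    · intro h
      have heig := hiff.mp h
      have hdiag : Matrix.diagonal μ
          = ((∏ i, μ i) ^ ((1:ℝ)/p)) • (1 : Matrix (Fin p) (Fin p) ℝ) := by
        rw [Matrix.smul_one_eq_diagonal]
        exact congrArg Matrix.diagonal (funext fun i => heig i)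
      rw [hspec, hdiag, Matrix.mul_smul, Matrix.smul_mul, Matrix.mul_one, hUU']
    · intro h
      rw [← htr, h, Matrix.trace_smul, Matrix.trace_one]
      simp [smul_eq_mul, Fintype.card_fin]
      ring

end Aux

/-- Lower bound for the bias integral over unit-determinant metrics when the
Hessian is positive definite: `|∫_{S_A} xᵀHx dx| ≥ ρ·p·(det H)^{1/p}` with
equality iff `AᵀA = c⁻¹H`, `c = (det H)^{1/p}`. -/
theorem bias_lower_bound {p : ℕ} (hp : 0 < p)
    (H : Matrix (Fin p) (Fin p) ℝ) (hH : H.PosDef)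
    (A : Matrix (Fin p) (Fin p) ℝ) (hA : A.det = 1) :
    (∫ y in {y : Fin p → ℝ | y ⬝ᵥ y ≤ 1}, (y ⟨0, hp⟩) ^ 2) * p *
        H.det ^ ((1:ℝ)/p) ≤
      |∫ x in {x : Fin p → ℝ | x ⬝ᵥ (Aᵀ * A) *ᵥ x ≤ 1}, x ⬝ᵥ H *ᵥ x| ∧
    (|∫ x in {x : Fin p → ℝ | x ⬝ᵥ (Aᵀ * A) *ᵥ x ≤ 1}, x ⬝ᵥ H *ᵥ x| =
        (∫ y in {y : Fin p → ℝ | y ⬝ᵥ y ≤ 1}, (y ⟨0, hp⟩) ^ 2) * p *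
          H.det ^ ((1:ℝ)/p) ↔
      Aᵀ * A = (H.det ^ ((1:ℝ)/p))⁻¹ • H) := by
  classical
  have hdetA : A.det ≠ 0 := by rw [hA]; norm_num
  have hAu : IsUnit A.det := isUnit_iff_ne_zero.mpr hdetA
  set B := A⁻¹ with hBdef
  have hBA : B * A = 1 := Matrix.nonsing_inv_mul A hAu
  have hAB : A * B = 1 := Matrix.mul_nonsing_inv A hAu
  set M := Bᵀ * H * B with hMdef
  have hstar : ∀ v : Fin p → ℝ, star v = v := fun v => funext fun k => star_trivial _
  have hquad : ∀ x : Fin p → ℝ, x ⬝ᵥ M *ᵥ x = (B *ᵥ x) ⬝ᵥ H *ᵥ (B *ᵥ x) := by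
    intro x
    rw [hMdef, ← Matrix.mulVec_mulVec, ← Matrix.mulVec_mulVec, Matrix.dotProduct_mulVec,
      Matrix.vecMul_transpose]
  have hMsym : M.IsHermitian := by
    have hH' : Hᵀ = H := by
      have h1 := hH.1
      rwa [Matrix.IsHermitian, Matrix.conjTranspose_eq_transpose_of_trivial] at h1
    show Mᴴ = M
    rw [Matrix.conjTranspose_eq_transpose_of_trivial, hMdef, Matrix.transpose_mul,
      Matrix.transpose_mul, Matrix.transpose_transpose, hH', Matrix.mul_assoc]
  have hBx : ∀ x : Fin p → ℝ, x ≠ 0 → B *ᵥ x ≠ 0 := by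
    intro x hx hBx0
    apply hx
    have h1 : (A * B) *ᵥ x = x := by rw [hAB, Matrix.one_mulVec]
    rw [← h1, ← Matrix.mulVec_mulVec, hBx0, Matrix.mulVec_zero]
  have hMpd : M.PosDef := by
    refine Matrix.posDef_iff_dotProduct_mulVec.mpr ⟨hMsym, fun x hx => ?_⟩
    have h1 := hH.dotProduct_mulVec_pos (hBx x hx)
    rw [hstar] at h1 ⊢
    rw [hquad x]
    exact h1
  have hdetM : M.det = H.det := by
    rw [hMdef, Matrix.det_mul, Matrix.det_mul, Matrix.det_transpose, Matrix.det_nonsing_inv, hA]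
    simp
  set S : Set (Fin p → ℝ) := {y : Fin p → ℝ | y ⬝ᵥ y ≤ 1} with hS
  set ρ := ∫ y in S, (y (⟨0, hp⟩ : Fin p)) ^ 2 with hρ
  -- Change of variables
  have hset : {x : Fin p → ℝ | x ⬝ᵥ (Aᵀ * A) *ᵥ x ≤ 1} = (fun x => A *ᵥ x) ⁻¹' S := by
    ext x
    simp only [Set.mem_preimage, Set.mem_setOf_eq, hS]
    rw [← Matrix.mulVec_mulVec, Matrix.dotProduct_mulVec, Matrix.vecMul_transpose]
  have hint : ∀ x : Fin p → ℝ, x ⬝ᵥ H *ᵥ x = (A *ᵥ x) ⬝ᵥ M *ᵥ (A *ᵥ x) := by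
    intro x
    rw [hquad (A *ᵥ x), Matrix.mulVec_mulVec, hBA, Matrix.one_mulVec]
  have habsdet : |A.det| = 1 := by rw [hA]; norm_num
  have hCOV : ∫ x in {x : Fin p → ℝ | x ⬝ᵥ (Aᵀ * A) *ᵥ x ≤ 1}, x ⬝ᵥ H *ᵥ x
      = ∫ y in S, y ⬝ᵥ M *ᵥ y := by
    rw [hset, ← cov A habsdet S (fun y => y ⬝ᵥ M *ᵥ y)]
    refine integral_congr_ae (Filter.Eventually.of_forall fun x => ?_)
    exact hint x
  -- The integral over the ball equals trace M * ρ
  have hIbase : ∀ i j : Fin p,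
      IntegrableOn (fun y : Fin p → ℝ => M i j * (y i * y j)) S volume := fun i j =>
    ((continuous_const.mul ((continuous_apply i).mul
      (continuous_apply j))).continuousOn).integrableOn_compact isCompact_unitBall
  have hexp : ∀ y : Fin p → ℝ, y ⬝ᵥ M *ᵥ y = ∑ i, ∑ j, M i j * (y i * y j) := by
    intro y
    unfold Matrix.mulVec dotProduct
    refine Finset.sum_congr rfl fun i _ => ?_
    rw [Finset.mul_sum]
    exact Finset.sum_congr rfl fun j _ => by ring
  have hsum : ∫ y in S, y ⬝ᵥ M *ᵥ y = M.trace * ρ := by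
    calc ∫ y in S, y ⬝ᵥ M *ᵥ y
        = ∫ y in S, ∑ i, ∑ j, M i j * (y i * y j) :=
          integral_congr_ae (Filter.Eventually.of_forall fun y => hexp y)
      _ = ∑ i, ∫ y in S, ∑ j, M i j * (y i * y j) :=
          integral_finset_sum _ (fun i _ => integrable_finset_sum _ fun j _ => hIbase i j)
      _ = ∑ i, ∑ j, ∫ y in S, M i j * (y i * y j) :=
          Finset.sum_congr rfl fun i _ => integral_finset_sum _ (fun j _ => hIbase i j)
      _ = ∑ i, ∑ j, M i j * ∫ y in S, y i * y j := by simp_rw [integral_const_mul]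
      _ = ∑ i, M i i * ρ := by
          refine Finset.sum_congr rfl fun i _ => ?_
          rw [Finset.sum_eq_single i (fun j _ hj => by
              rw [hS, integral_offdiag_zero (Ne.symm hj), mul_zero])
            (fun h => absurd (Finset.mem_univ i) h)]
          congr 1
          calc ∫ y in S, y i * y i = ∫ y in S, (y i)^2 :=
                integral_congr_ae (Filter.Eventually.of_forall fun y => (sq (y i)).symm)
            _ = ρ := by rw [hρ, hS]; exact integral_sq_swap i ⟨0, hp⟩
      _ = M.trace * ρ := by
          unfold Matrix.trace Matrix.diag
          rw [Finset.sum_mul]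
  set c := H.det ^ ((1:ℝ)/p) with hc
  have hcpos : 0 < c := Real.rpow_pos_of_pos hH.det_pos _
  obtain ⟨htb1, htb2⟩ := trace_bound hp M hMpd
  rw [hdetM] at htb1 htb2
  have hρpos : 0 < ρ := by rw [hρ, hS]; exact rho_pos ⟨0, hp⟩
  have htrpos : 0 < M.trace := lt_of_lt_of_le (by positivity) htb1
  have habs2 : |∫ x in {x : Fin p → ℝ | x ⬝ᵥ (Aᵀ * A) *ᵥ x ≤ 1}, x ⬝ᵥ H *ᵥ x|
      = M.trace * ρ := by
    rw [hCOV, hsum]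
    exact abs_of_pos (mul_pos htrpos hρpos)
  have hABt : Aᵀ * Bᵀ = 1 := by rw [← Matrix.transpose_mul, hBA, Matrix.transpose_one]
  have hBtAt : Bᵀ * Aᵀ = 1 := by rw [← Matrix.transpose_mul, hAB, Matrix.transpose_one]
  constructor
  · rw [habs2]
    calc ρ * p * c = (↑p * c) * ρ := by ring
      _ ≤ M.trace * ρ := mul_le_mul_of_nonneg_right htb1 hρpos.le
  · rw [habs2]
    constructor
    · intro h
      have htreq : M.trace = ↑p * c := by
        have h1 : M.trace * ρ = (↑p * c) * ρ := by rw [h]; ring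
        exact mul_right_cancel₀ (ne_of_gt hρpos) h1
      have hM1 : M = c • 1 := htb2.mp htreq
      have h2 : Aᵀ * M * A = H := by
        rw [hMdef]
        rw [show Aᵀ * (Bᵀ * H * B) * A = (Aᵀ * Bᵀ) * (H * (B * A)) from by noncomm_ring,
          hABt, hBA, Matrix.one_mul, Matrix.mul_one]
      have hH' : H = c • (Aᵀ * A) := by
        rw [← h2, hM1, Matrix.mul_smul, Matrix.smul_mul, Matrix.mul_one]
      rw [hH', smul_smul, inv_mul_cancel₀ (ne_of_gt hcpos), one_smul]
    · intro h
      have hH' : H = c • (Aᵀ * A) := by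
        rw [h, smul_smul, mul_inv_cancel₀ (ne_of_gt hcpos), one_smul]
      have hM1 : M = c • 1 := by
        rw [hMdef, hH']
        calc Bᵀ * (c • (Aᵀ * A)) * B = c • (Bᵀ * (Aᵀ * A) * B) := by
              rw [Matrix.mul_smul, Matrix.smul_mul]
          _ = c • ((Bᵀ * Aᵀ) * (A * B)) := by
              rw [show Bᵀ * (Aᵀ * A) * B = (Bᵀ * Aᵀ) * (A * B) from by noncomm_ring]
          _ = c • 1 := by rw [hBtAt, hAB, Matrix.one_mul]
      have : M.trace = ↑p * c := by
        rw [hM1, Matrix.trace_smul, Matrix.trace_one]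
        simp [smul_eq_mul, Fintype.card_fin]
        ring
      rw [this]; ring
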